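/- Let Δ(t) = t + 2 + t⁻¹. Then D₁ = ℚ[s]/(s+2) is canonically isomorphic to ℚ, and under this identification the image of φ₁ : E₁^× → D₁^× = ℚ^× is exactly the subgroup (ℚ^×)² of squares; consequently the cokernel D₁^×/φ₁(E₁^×) is isomorphic to ℚ^×/(ℚ^×)², which is an infinite group (isomorphic to a direct sum of copies of ℤ/2ℤ indexed by {−1} together with the prime numbers). -/

import Mathlib

open LaurentPolynomial

set_option maxHeartbeats 1000000
set_option synthInstance.maxHeartbeats 400000

noncomputable section

/-- `Λ = ℚ[t,t⁻¹]`, the ring of Laurent polynomials over `ℚ`. -/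
abbrev Λ : Type := LaurentPolynomial ℚ

/-- The variable `t` of `Λ`. -/
def tΛ : Λ := T 1

/-- The involution `P(t) ↦ P(t⁻¹)` of `Λ`. -/
def lbar : Λ →+* Λ := (invert : Λ ≃ₐ[ℚ] Λ).toRingEquiv.toRingHom

/-- `P ∈ Λ` is symmetric if `P(t⁻¹) = P(t)`. -/
def SymmL (P : Λ) : Prop := lbar P = P

/-- The fraction field `ℚ(t)` of `Λ`. -/
abbrev KΛ : Type := FractionRing Λ

/-- The involution of `ℚ(t)` extending that of `Λ`. -/
def kbar : KΛ →+* KΛ :=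
  (IsFractionRing.ringEquivOfRingEquiv (A := Λ) (B := Λ) (K := KΛ) (L := KΛ)
    (invert : Λ ≃ₐ[ℚ] Λ).toRingEquiv).toRingHom

lemma kbar_algebraMap (P : Λ) : kbar (algebraMap Λ KΛ P) = algebraMap Λ KΛ (lbar P) := by
  simp [kbar, lbar]

/-- The image of `Λ` inside `ℚ(t)`, as a `Λ`-submodule of `ℚ(t)`. -/
def ΛinK : Submodule Λ KΛ := LinearMap.range (Algebra.linearMap Λ KΛ)

/-- The quotient `Λ`-module `ℚ(t)/Λ`. -/
abbrev QL : Type := KΛ ⧸ ΛinK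

/-- The class in `ℚ(t)/Λ` of an element of `ℚ(t)`. -/
abbrev QLmk : KΛ →ₗ[Λ] QL := ΛinK.mkQ

/-- The class of the fraction `P/Q` in `ℚ(t)/Λ`, for `P Q : Λ`. -/
def fracQ (P Q : Λ) : QL := QLmk (algebraMap Λ KΛ P / algebraMap Λ KΛ Q)

/-- The involution of `ℚ(t)/Λ` induced by `P(t) ↦ P(t⁻¹)`. -/
def qbar : QL → QL := fun x =>
  Quotient.liftOn x (fun a => QLmk (kbar a)) (by
    intro a b h
    obtain ⟨r, hr⟩ := (Submodule.quotientRel_def (p := ΛinK)).mp h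
    apply (Submodule.Quotient.eq _).2
    refine ⟨lbar r, ?_⟩
    rw [← map_sub, ← hr]
    exact (kbar_algebraMap _).symm)

lemma qbar_mk (a : KΛ) : qbar (QLmk a) = QLmk (kbar a) := rfl

/-- Evaluation of a Laurent polynomial at a nonzero rational number. -/
def evalL (q : ℚˣ) : Λ →ₐ[ℚ] ℚ :=
  AddMonoidAlgebra.lift ℚ ℚ ℤ ((Units.coeHom ℚ).comp (zpowersHom ℚˣ q))

/-- A hermitian form on a `Λ`-module `A`, with values in `ℚ(t)/Λ`:
it is `Λ`-linear in the first variable and conjugate-symmetric (hence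
semilinear with respect to the involution in the second variable). -/
structure HermForm (A : Type*) [AddCommGroup A] [Module Λ A] where
  bil : A → A → QL
  add_left : ∀ x y z : A, bil (x + y) z = bil x z + bil y z
  smul_left : ∀ (r : Λ) (x y : A), bil (r • x) y = r • bil x y
  conj_symm : ∀ x y : A, bil x y = qbar (bil y x)

/-- A hermitian form is non-degenerate if `φ(x,y) = 0` for all `y` implies `x = 0`. -/
def HermForm.Nondeg {A : Type*} [AddCommGroup A] [Module Λ A] (φ : HermForm A) : Prop :=
  ∀ x : A, (∀ y : A, φ.bil x y = 0) → x = 0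

/-- Two hermitian forms are isometric if they differ by a `Λ`-module automorphism. -/
def HermForm.Isometric {A : Type*} [AddCommGroup A] [Module Λ A]
    (φ₁ φ₂ : HermForm A) : Prop :=
  ∃ f : A ≃ₗ[Λ] A, ∀ x y : A, φ₂.bil x y = φ₁.bil (f x) (f y)

/-- The `ℚ`-algebra map `ℚ[s] → Λ` sending `s` to `t + t⁻¹`. -/
def θQ : Polynomial ℚ →ₐ[ℚ] Λ := Polynomial.aeval (T 1 + T (-1))

/-- `Eₙ = Λ/(Δⁿ)`. -/
abbrev En (Δ : Λ) (n : ℕ) : Type := Λ ⧸ (Ideal.span {Δ ^ n} : Ideal Λ)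

/-- `Dₙ = ℚ[s]/(Δ_sⁿ)`. -/
abbrev Dn (Δs : Polynomial ℚ) (n : ℕ) : Type :=
  Polynomial ℚ ⧸ (Ideal.span {Δs ^ n} : Ideal (Polynomial ℚ))

/-- The ring homomorphism `Dₙ → Eₙ` induced by `s ↦ t + t⁻¹`. -/
def ιDE (Δ : Λ) (Δs : Polynomial ℚ) (hθ : θQ Δs = Δ) (n : ℕ) : Dn Δs n →+* En Δ n :=
  Ideal.quotientMap (Ideal.span {Δ ^ n}) θQ.toRingHom (by
    rw [Ideal.span_le, Set.singleton_subset_iff, SetLike.mem_coe, Ideal.mem_comap]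
    have : θQ.toRingHom (Δs ^ n) = Δ ^ n := by rw [map_pow]; exact congrArg (· ^ n) hθ
    rw [this]
    exact Ideal.subset_span rfl)

/-- The involution of `Eₙ` induced by that of `Λ` (using that `Δ` is symmetric). -/
def barE (Δ : Λ) (hsym : lbar Δ = Δ) (n : ℕ) : En Δ n →+* En Δ n :=
  Ideal.quotientMap (Ideal.span {Δ ^ n}) lbar (by
    rw [Ideal.span_le, Set.singleton_subset_iff, SetLike.mem_coe, Ideal.mem_comap]
    have : lbar (Δ ^ n) = Δ ^ n := by rw [map_pow, hsym]
    rw [this]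
    exact Ideal.subset_span rfl)

/-- The image of `φₙ : Eₙˣ → Dₙˣ`, i.e. the subgroup of `Dₙˣ` of elements `d` such
that the image of `d` in `Eₙ` is of the form `R·R̄` for a unit `R` of `Eₙ`. -/
def normSub (Δ : Λ) (Δs : Polynomial ℚ) (hθ : θQ Δs = Δ) (hsym : lbar Δ = Δ) (n : ℕ) :
    Subgroup (Dn Δs n)ˣ where
  carrier := {d : (Dn Δs n)ˣ | ∃ R : (En Δ n)ˣ,
    ιDE Δ Δs hθ n (d : Dn Δs n) = (R : En Δ n) * barE Δ hsym n (R : En Δ n)}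
  one_mem' := ⟨1, by simp⟩
  mul_mem' := by
    rintro a b ⟨R, hR⟩ ⟨S, hS⟩
    refine ⟨R * S, ?_⟩
    rw [Units.val_mul, map_mul, hR, hS, Units.val_mul, map_mul]
    ring
  inv_mem' := by
    rintro a ⟨R, hR⟩
    refine ⟨R⁻¹, ?_⟩
    have hxu : ιDE Δ Δs hθ n ((a⁻¹ : (Dn Δs n)ˣ) : Dn Δs n)
        * ((R : En Δ n) * barE Δ hsym n (R : En Δ n)) = 1 := by
      rw [← hR, ← map_mul, ← Units.val_mul, inv_mul_cancel, Units.val_one, map_one]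
    have h1 : ((R⁻¹ : (En Δ n)ˣ) : En Δ n) * (R : En Δ n) = 1 := by
      rw [← Units.val_mul, inv_mul_cancel, Units.val_one]
    have hyu : (((R⁻¹ : (En Δ n)ˣ) : En Δ n) * barE Δ hsym n ((R⁻¹ : (En Δ n)ˣ) : En Δ n))
        * ((R : En Δ n) * barE Δ hsym n (R : En Δ n)) = 1 := by
      calc (((R⁻¹ : (En Δ n)ˣ) : En Δ n) * barE Δ hsym n ((R⁻¹ : (En Δ n)ˣ) : En Δ n))
            * ((R : En Δ n) * barE Δ hsym n (R : En Δ n))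
          = (((R⁻¹ : (En Δ n)ˣ) : En Δ n) * (R : En Δ n))
            * (barE Δ hsym n ((R⁻¹ : (En Δ n)ˣ) : En Δ n) * barE Δ hsym n (R : En Δ n)) := by
            ring
        _ = 1 := by rw [h1, ← map_mul, h1, map_one, one_mul]
    calc ιDE Δ Δs hθ n ((a⁻¹ : (Dn Δs n)ˣ) : Dn Δs n)
        = ιDE Δ Δs hθ n ((a⁻¹ : (Dn Δs n)ˣ) : Dn Δs n)
          * (((R : En Δ n) * barE Δ hsym n (R : En Δ n))
          * (((R⁻¹ : (En Δ n)ˣ) : En Δ n) * barE Δ hsym n ((R⁻¹ : (En Δ n)ˣ) : En Δ n))) := by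
          rw [show ((R : En Δ n) * barE Δ hsym n (R : En Δ n))
            * (((R⁻¹ : (En Δ n)ˣ) : En Δ n) * barE Δ hsym n ((R⁻¹ : (En Δ n)ˣ) : En Δ n)) = 1 by
              rw [mul_comm]; exact hyu]
          rw [mul_one]
      _ = (ιDE Δ Δs hθ n ((a⁻¹ : (Dn Δs n)ˣ) : Dn Δs n)
          * ((R : En Δ n) * barE Δ hsym n (R : En Δ n)))
          * (((R⁻¹ : (En Δ n)ˣ) : En Δ n) * barE Δ hsym n ((R⁻¹ : (En Δ n)ˣ) : En Δ n)) := by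
          ring
      _ = ((R⁻¹ : (En Δ n)ˣ) : En Δ n) * barE Δ hsym n ((R⁻¹ : (En Δ n)ˣ) : En Δ n) := by
          rw [hxu, one_mul]

instance normSub_normal (Δ : Λ) (Δs : Polynomial ℚ) (hθ : θQ Δs = Δ) (hsym : lbar Δ = Δ)
    (n : ℕ) : (normSub Δ Δs hθ hsym n).Normal :=
  ⟨fun a h g => by rwa [mul_comm g a, mul_assoc, mul_inv_cancel, mul_one]⟩

/-- The reduction map `Dₙ → D₁`. -/
def redD (Δs : Polynomial ℚ) (n : ℕ) (hn : 1 ≤ n) : Dn Δs n →+* Dn Δs 1 :=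
  Ideal.Quotient.factor (by
    rw [Ideal.span_le, Set.singleton_subset_iff, SetLike.mem_coe, Ideal.mem_span_singleton,
      pow_one]
    exact dvd_pow_self Δs (by omega))

/-- `Δ = t + 2 + t⁻¹`. -/
def Δ4 : Λ := tΛ + 2 + T (-1)

/-- `Δ_s = s + 2`. -/
def Δs4 : Polynomial ℚ := Polynomial.X - Polynomial.C (-2)

lemma hθ4 : θQ Δs4 = Δ4 := by
  simp only [Δs4, θQ, Δ4, map_sub, Polynomial.aeval_X, Polynomial.aeval_C, tΛ]
  have : (algebraMap ℚ Λ) (-2 : ℚ) = (-2 : Λ) := by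
    rw [map_neg, map_ofNat]
  rw [this]
  ring

lemma hsym4 : lbar Δ4 = Δ4 := by
  have h2 : lbar (2 : Λ) = 2 := map_ofNat _ 2
  simp only [Δ4, tΛ, map_add, h2]
  have hT : ∀ k : ℤ, lbar (T k : Λ) = T (-k) := fun k => by
    simp [lbar, LaurentPolynomial.invert_T]
  rw [hT 1, hT (-1)]
  ring_nf

/-- The canonical map `D₁ = ℚ[s]/(s+2) → ℚ`, evaluation at `s = -2`. -/
def evD1 : Dn Δs4 1 →+* ℚ :=
  Ideal.Quotient.lift _ (Polynomial.evalRingHom (-2)) (by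
    intro a ha
    rw [Ideal.mem_span_singleton] at ha
    obtain ⟨c, rfl⟩ := ha
    simp [Δs4])

/-!
Evaluation at `t = -1`, a root of `Δ = (t + 1)² / t` lying over `s = -2` and fixed by
`t ↦ t⁻¹`, sends `R R̄` to the square of the value of `R`; conversely a nonzero square `q²` is
the norm of the constant `q`. Hence under `D₁ ≅ ℚ` the image of `φ₁` is `(ℚ^×)²`. The group
`ℚ^×/(ℚ^×)²` is the `𝔽₂`-vector space with coordinates the sign and the parities of the
`p`-adic valuations, which is free on the classes of `-1` and of the primes.
-/

lemma evalL_T (q : ℚˣ) (k : ℤ) : evalL q (T k) = ((q ^ k : ℚˣ) : ℚ) := by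
  rw [evalL, T, AddMonoidAlgebra.lift_single]
  simp

lemma evalL_C (q : ℚˣ) (a : ℚ) : evalL q (C a) = a := by
  rw [C_eq_algebraMap, AlgHom.commutes, Algebra.algebraMap_self_apply]

lemma lbar_T (k : ℤ) : lbar (T k) = T (-k) := by simp [lbar]

lemma lbar_C (a : ℚ) : lbar (C a) = C a := by simp [lbar]

lemma evalL_lbar (q : ℚˣ) (P : Λ) : evalL q (lbar P) = evalL q⁻¹ P := by
  induction P using LaurentPolynomial.induction_on' with
  | add P Q hP hQ => rw [map_add, map_add, map_add, hP, hQ]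
  | C_mul_T k a =>
    rw [map_mul, lbar_C, lbar_T, map_mul, map_mul, evalL_C, evalL_C, evalL_T, evalL_T, inv_zpow',
      zpow_neg]

lemma evalL_θQ (q : ℚˣ) (p : Polynomial ℚ) : evalL q (θQ p) = p.eval ((q : ℚ) + q⁻¹) := by
  rw [θQ, ← Polynomial.aeval_algHom_apply, map_add, evalL_T, evalL_T]
  simp [Polynomial.aeval_def, Polynomial.eval₂_eq_eval_map]

def evalEn (q : ℚˣ) (Δ : Λ) (n : ℕ) (hn : n ≠ 0) (hΔ : evalL q Δ = 0) : En Δ n →+* ℚ :=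
  Ideal.Quotient.lift _ (evalL q).toRingHom (fun P hP => by
    obtain ⟨c, rfl⟩ := Ideal.mem_span_singleton.1 hP
    simp [hΔ, hn])

section evalEn

variable {q : ℚˣ} {Δ : Λ} {n : ℕ} {hn : n ≠ 0} {hΔ : evalL q Δ = 0}

lemma evalEn_mk (P : Λ) : evalEn q Δ n hn hΔ (Ideal.Quotient.mk _ P) = evalL q P := rfl

lemma evalEn_barE (hq : q⁻¹ = q) (hsym : lbar Δ = Δ) (e : En Δ n) :
    evalEn q Δ n hn hΔ (barE Δ hsym n e) = evalEn q Δ n hn hΔ e := by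
  obtain ⟨P, rfl⟩ := Ideal.Quotient.mk_surjective e
  rw [barE, Ideal.quotientMap_mk, evalEn_mk, evalEn_mk, evalL_lbar, hq]

lemma evalEn_ιDE_mk {Δs : Polynomial ℚ} (hθ : θQ Δs = Δ) (p : Polynomial ℚ) :
    evalEn q Δ n hn hΔ (ιDE Δ Δs hθ n (Ideal.Quotient.mk _ p)) = p.eval ((q : ℚ) + q⁻¹) := by
  rw [ιDE, Ideal.quotientMap_mk, evalEn_mk]
  exact evalL_θQ q p

lemma exists_sq_of_mem_normSub (hq : q⁻¹ = q) {Δs : Polynomial ℚ} (hθ : θQ Δs = Δ)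
    (hsym : lbar Δ = Δ) {d : (Dn Δs n)ˣ} (hd : d ∈ normSub Δ Δs hθ hsym n) :
    ∃ r : ℚ, r ≠ 0 ∧ evalEn q Δ n hn hΔ (ιDE Δ Δs hθ n d) = r ^ 2 := by
  obtain ⟨R, hR⟩ := hd
  refine ⟨evalEn q Δ n hn hΔ R, ((R.map (evalEn q Δ n hn hΔ).toMonoidHom).ne_zero), ?_⟩
  rw [hR, map_mul, evalEn_barE hq, sq]

end evalEn

lemma mem_normSub_of_eq_C_sq (Δ : Λ) (Δs : Polynomial ℚ) (hθ : θQ Δs = Δ) (hsym : lbar Δ = Δ)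
    (n : ℕ) {r : ℚ} (hr : r ≠ 0) {d : (Dn Δs n)ˣ}
    (hd : (d : Dn Δs n) = Ideal.Quotient.mk _ (Polynomial.C (r ^ 2))) :
    d ∈ normSub Δ Δs hθ hsym n := by
  refine ⟨(Units.mk0 r hr).map ((Ideal.Quotient.mk _).comp C).toMonoidHom, ?_⟩
  rw [hd, ιDE, Units.coe_map, Units.val_mk0, barE]
  simp only [RingHom.toMonoidHom_eq_coe, MonoidHom.coe_coe, RingHom.comp_apply,
    Ideal.quotientMap_mk, lbar_C, ← sq]
  rw [AlgHom.toRingHom_eq_coe, RingHom.coe_coe, θQ, Polynomial.aeval_C, C_eq_algebraMap,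
    map_pow, map_pow]

lemma evD1_mk (p : Polynomial ℚ) : evD1 (Ideal.Quotient.mk _ p) = p.eval (-2) :=
  Ideal.Quotient.lift_mk _ _ _

lemma evD1_bijective : Function.Bijective evD1 := by
  refine ⟨(injective_iff_map_eq_zero _).2 fun a ha => ?_,
    fun x => ⟨Ideal.Quotient.mk _ (Polynomial.C x), by rw [evD1_mk, Polynomial.eval_C]⟩⟩
  obtain ⟨p, rfl⟩ := Ideal.Quotient.mk_surjective a
  rw [evD1_mk] at ha
  rw [Ideal.Quotient.eq_zero_iff_mem, Ideal.mem_span_singleton, pow_one, Δs4]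
  exact Polynomial.dvd_iff_isRoot.2 ha

lemma evalL_neg_one_Δ4 : evalL (-1) Δ4 = 0 := by
  rw [Δ4, tΛ, map_add, map_add, map_ofNat, evalL_T, evalL_T]
  norm_num

lemma evalEn_ιDE_eq_evD1 (d : Dn Δs4 1) :
    evalEn (-1) Δ4 1 one_ne_zero evalL_neg_one_Δ4 (ιDE Δ4 Δs4 hθ4 1 d) = evD1 d := by
  obtain ⟨p, rfl⟩ := Ideal.Quotient.mk_surjective d
  rw [evalEn_ιDE_mk, evD1_mk]
  norm_num

lemma mem_normSub_Δ4_iff (d : (Dn Δs4 1)ˣ) :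
    d ∈ normSub Δ4 Δs4 hθ4 hsym4 1 ↔ ∃ q : ℚ, q ≠ 0 ∧ evD1 (d : Dn Δs4 1) = q ^ 2 := by
  refine ⟨fun hd => ?_, fun ⟨q, hq, hdq⟩ => mem_normSub_of_eq_C_sq _ _ _ _ _ hq ?_⟩
  · simpa only [evalEn_ιDE_eq_evD1] using exists_sq_of_mem_normSub (hn := one_ne_zero)
      (hΔ := evalL_neg_one_Δ4) inv_neg_one hθ4 hsym4 hd
  · exact evD1_bijective.1 (by rw [hdq, evD1_mk, Polynomial.eval_C])

def unitsD1EquivRat : (Dn Δs4 1)ˣ ≃* ℚˣ :=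
  Units.mapEquiv (RingEquiv.ofBijective evD1 evD1_bijective).toMulEquiv

lemma map_normSub_Δ4 :
    (normSub Δ4 Δs4 hθ4 hsym4 1).map unitsD1EquivRat.toMonoidHom = (powMonoidHom 2).range := by
  ext u
  rw [Subgroup.mem_map_equiv, mem_normSub_Δ4_iff, MonoidHom.mem_range]
  have hval : evD1 (unitsD1EquivRat.symm u : Dn Δs4 1) = u :=
    congrArg Units.val (unitsD1EquivRat.apply_symm_apply u)
  rw [hval]
  constructor
  · rintro ⟨q, hq, hu⟩
    exact ⟨Units.mk0 q hq, Units.ext (by simp [hu])⟩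
  · rintro ⟨v, rfl⟩
    exact ⟨v, v.ne_zero, by simp⟩

def signParity (q : ℚ) : ZMod 2 := if q < 0 then 1 else 0

lemma signParity_mul {q r : ℚ} (hq : q ≠ 0) (hr : r ≠ 0) :
    signParity (q * r) = signParity q + signParity r := by
  rcases hq.lt_or_gt with hq | hq <;> rcases hr.lt_or_gt with hr | hr <;>
    simp [signParity, mul_neg_iff, hq, hr, hq.not_gt, hr.not_gt, CharTwo.add_self_eq_zero]

/-- Since `q = (num · den) / den²`, a positive `q` is a square as soon as `num · den` is. -/
def numMulDen (q : ℚ) : ℕ := q.num.natAbs * q.den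

lemma numMulDen_ne_zero {q : ℚ} (hq : q ≠ 0) : numMulDen q ≠ 0 :=
  mul_ne_zero (Int.natAbs_ne_zero.2 (Rat.num_ne_zero.2 hq)) q.den_nz

lemma natCast_factorization_numMulDen {q : ℚ} (hq : q ≠ 0) {p : ℕ} (hp : p.Prime) :
    ((numMulDen q).factorization p : ZMod 2) = ((padicValRat p q : ℤ) : ZMod 2) := by
  rw [numMulDen, Nat.factorization_mul (Int.natAbs_ne_zero.2 (Rat.num_ne_zero.2 hq)) q.den_nz,
    Finsupp.add_apply, Nat.factorization_def _ hp, Nat.factorization_def _ hp, padicValRat_def,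
    padicValInt, Nat.cast_add, Int.cast_sub, Int.cast_natCast, Int.cast_natCast, sub_eq_add_neg,
    ZMod.neg_eq_self_mod_two]

lemma exists_sq_eq_of_even_factorization {n : ℕ} (hn : n ≠ 0)
    (h : ∀ p, Even (n.factorization p)) : ∃ m, m ^ 2 = n := by
  refine ⟨Nat.floorRoot 2 n, Nat.eq_of_factorization_eq (by simp [hn]) hn fun p => ?_⟩
  rw [Nat.factorization_pow, Finsupp.smul_apply, Nat.factorization_floorRoot,
    Finsupp.floorDiv_apply, Nat.floorDiv_eq_div, smul_eq_mul, Nat.mul_div_cancel' (h p).two_dvd]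

lemma exists_sq_eq_of_even_factorization_numMulDen {q : ℚ} (hq : 0 < q)
    (h : ∀ p, Even ((numMulDen q).factorization p)) : ∃ r : ℚ, r ^ 2 = q := by
  obtain ⟨m, hm⟩ := exists_sq_eq_of_even_factorization (numMulDen_ne_zero hq.ne') h
  refine ⟨m / q.den, ?_⟩
  have hnum : ((q.num.natAbs : ℕ) : ℚ) = q.num := by
    rw [Nat.cast_natAbs, abs_of_pos (Rat.num_pos.2 hq)]
  rw [div_pow, ← Nat.cast_pow, hm, numMulDen, Nat.cast_mul, hnum, sq,
    mul_div_mul_right _ _ (Nat.cast_ne_zero.2 q.den_nz), Rat.num_div_den]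

/-- At `p` this is `v_p(q) mod 2`, computed from `num · den` so that the support is finite. -/
def squareClass (q : ℚ) : (Unit ⊕ {p : ℕ // p.Prime}) →₀ ZMod 2 :=
  Finsupp.sumElim (Finsupp.single () (signParity q))
    (((numMulDen q).factorization.mapRange (↑) Nat.cast_zero).subtypeDomain Nat.Prime)

lemma squareClass_inl (q : ℚ) (u : Unit) : squareClass q (Sum.inl u) = signParity q := by
  simp [squareClass]

lemma squareClass_inr (q : ℚ) (p : {p : ℕ // p.Prime}) :
    squareClass q (Sum.inr p) = (numMulDen q).factorization p := by
  simp [squareClass]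

lemma squareClass_mul {q r : ℚ} (hq : q ≠ 0) (hr : r ≠ 0) :
    squareClass (q * r) = squareClass q + squareClass r := by
  ext (u | ⟨p, hp⟩)
  · simp only [Finsupp.add_apply, squareClass_inl, signParity_mul hq hr]
  · have := Fact.mk hp
    simp only [Finsupp.add_apply, squareClass_inr,
      natCast_factorization_numMulDen (mul_ne_zero hq hr) hp,
      natCast_factorization_numMulDen hq hp, natCast_factorization_numMulDen hr hp,
      padicValRat.mul (p := p) hq hr, Int.cast_add]

def squareClassHom : ℚˣ →* Multiplicative ((Unit ⊕ {p : ℕ // p.Prime}) →₀ ZMod 2) :=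
  MonoidHom.mk' (fun q => .ofAdd (squareClass q)) fun q r => by
    rw [Units.val_mul, squareClass_mul q.ne_zero r.ne_zero, ofAdd_add]

lemma squareClassHom_apply (q : ℚˣ) : squareClassHom q = .ofAdd (squareClass q) := rfl

lemma ker_squareClassHom : squareClassHom.ker = (powMonoidHom 2).range := by
  ext q
  rw [MonoidHom.mem_ker, MonoidHom.mem_range]
  constructor
  · intro h
    have h0 : squareClass q = 0 := ofAdd_eq_one.1 h
    have hpos : 0 < (q : ℚ) := by
      have := DFunLike.congr_fun h0 (Sum.inl ())
      rw [squareClass_inl, signParity] at this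
      exact q.ne_zero.lt_or_gt.resolve_left fun hneg => by simp [hneg] at this
    have heven (p : ℕ) : Even ((numMulDen q).factorization p) := by
      by_cases hp : p.Prime
      · rw [← ZMod.natCast_eq_zero_iff_even, ← squareClass_inr q ⟨p, hp⟩, h0]
        rfl
      · simp [Nat.factorization_eq_zero_of_not_prime _ hp]
    obtain ⟨r, hr⟩ := exists_sq_eq_of_even_factorization_numMulDen hpos heven
    exact ⟨Units.mk0 r (by rintro rfl; simp [← hr] at hpos), Units.ext (by simp [hr])⟩
  · rintro ⟨v, rfl⟩
    rw [powMonoidHom_apply, squareClassHom_apply, ofAdd_eq_one, Units.val_pow_eq_pow_val, sq,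
      squareClass_mul v.ne_zero v.ne_zero]
    ext a
    exact CharTwo.add_self_eq_zero _

lemma squareClass_neg_one : squareClass (-1) = Finsupp.single (Sum.inl ()) 1 := by
  simp [squareClass, signParity, numMulDen]

lemma squareClass_natCast {p : ℕ} (hp : p.Prime) :
    squareClass p = Finsupp.single (Sum.inr ⟨p, hp⟩) 1 := by
  ext (u | ⟨r, hr⟩)
  · simp [squareClass_inl, signParity]
  · simp [squareClass_inr, numMulDen, hp.factorization, Finsupp.single_apply]

lemma squareClassHom_surjective : Function.Surjective squareClassHom := by
  suffices h : ∀ f, ∃ q : ℚˣ, squareClass q = f from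
    fun x => (h x.toAdd).imp fun q hq => congrArg Multiplicative.ofAdd hq
  intro f
  induction f using Finsupp.induction with
  | zero => exact ⟨1, by simp [squareClass, signParity, numMulDen]⟩
  | single_add a b f _ hb ih =>
    obtain ⟨q, hq⟩ := ih
    obtain rfl : b = 1 := by revert b; decide
    obtain ⟨q₀, hq₀⟩ : ∃ q₀ : ℚˣ, squareClass q₀ = Finsupp.single a 1 := by
      rcases a with ⟨⟩ | ⟨p, hp⟩
      · exact ⟨-1, by rw [Units.val_neg, Units.val_one, squareClass_neg_one]⟩
      · exact ⟨Units.mk0 p (Nat.cast_ne_zero.2 hp.ne_zero), squareClass_natCast hp⟩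
    exact ⟨q₀ * q, by rw [Units.val_mul, squareClass_mul q₀.ne_zero q.ne_zero, hq₀, hq]⟩

def cokernelEquiv : ((Dn Δs4 1)ˣ ⧸ normSub Δ4 Δs4 hθ4 hsym4 1) ≃*
    (ℚˣ ⧸ (powMonoidHom 2 : ℚˣ →* ℚˣ).range) :=
  QuotientGroup.congr _ _ unitsD1EquivRat map_normSub_Δ4

def squareClassEquiv : (ℚˣ ⧸ (powMonoidHom 2 : ℚˣ →* ℚˣ).range) ≃*
    Multiplicative ((Unit ⊕ {p : ℕ // p.Prime}) →₀ ZMod 2) :=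
  (QuotientGroup.quotientMulEquivOfEq ker_squareClassHom.symm).trans
    (QuotientGroup.quotientKerEquivOfSurjective _ squareClassHom_surjective)

/-- (for `Δ = t+2+t⁻¹`: `D₁ ≅ ℚ`, the image of `φ₁` is the squares,
and the cokernel is `ℚ^×/(ℚ^×)²`, an infinite group, isomorphic to a direct sum of
copies of `ℤ/2ℤ` indexed by `{-1}` together with the primes). -/
theorem stmt_4 :
    Function.Bijective evD1 ∧
    (∀ d : (Dn Δs4 1)ˣ,
      d ∈ normSub Δ4 Δs4 hθ4 hsym4 1 ↔ ∃ q : ℚ, q ≠ 0 ∧ evD1 (d : Dn Δs4 1) = q ^ 2) ∧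
    Nonempty (((Dn Δs4 1)ˣ ⧸ normSub Δ4 Δs4 hθ4 hsym4 1) ≃*
      (ℚˣ ⧸ (powMonoidHom 2 : ℚˣ →* ℚˣ).range)) ∧
    Infinite ((Dn Δs4 1)ˣ ⧸ normSub Δ4 Δs4 hθ4 hsym4 1) ∧
    Nonempty ((ℚˣ ⧸ (powMonoidHom 2 : ℚˣ →* ℚˣ).range) ≃*
      Multiplicative ((Unit ⊕ {p : ℕ // p.Prime}) →₀ ZMod 2)) := by
  refine ⟨evD1_bijective, mem_normSub_Δ4_iff, ⟨cokernelEquiv⟩, ?_, ⟨squareClassEquiv⟩⟩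
  have : Infinite {p : ℕ // p.Prime} := Nat.infinite_setOfPred_prime.to_subtype
  exact Infinite.of_injective _ (cokernelEquiv.trans squareClassEquiv).symm.injective
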